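/- Let (X,T) be an NDS, K ⊂ X_0 a non-empty compact subset and f a potential. (1) If P_low(T,f,K∩V) = P_low(T,f,K) for every open set V ⊂ X_0 with V∩K ≠ ∅, then P_low(T,f,K) = inf{ sup_{i≥1} P_low(T,f,F_i) : ∪_{i=1}^∞ F_i ⊃ K }. (2) If P_up(T,f,K∩V) = P_up(T,f,K) for every open set V ⊂ X_0 with V∩K ≠ ∅, then P_up(T,f,K) = inf{ sup_{i≥1} P_up(T,f,F_i) : ∪_{i=1}^∞ F_i ⊃ K }. -/
import Mathlib


open Filter Set
open scoped ENNReal NNReal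

noncomputable section

namespace NDS

variable {X : ℕ → Type*}

/-- The orbit maps `T_k^j : X k → X (k+j)` of a nonautonomous system. -/
def iterFrom (T : ∀ k, X k → X (k + 1)) (k : ℕ) : ∀ j, X k → X (k + j)
  | 0 => fun x => x
  | j + 1 => fun x => T (k + j) (iterFrom T k j x)

/-- The orbit maps `T^j = T_{j-1} ∘ ⋯ ∘ T_0 : X 0 → X j`. -/
def iter (T : ∀ k, X k → X (k + 1)) : ∀ j, X 0 → X j
  | 0 => fun x => x
  | j + 1 => fun x => T j (iter T j x)

variable [∀ k, MetricSpace (X k)]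

/-- The `n`-th Bowen metric on `X 0`:  `d_n^T(x,y) = max_{0 ≤ j ≤ n-1} d_j (T^j x) (T^j y)`. -/
def bowenDist (T : ∀ k, X k → X (k + 1)) (n : ℕ) (x y : X 0) : ℝ :=
  (((Finset.range n).sup fun j => nndist (iter T j x) (iter T j y) : ℝ≥0) : ℝ)

/-- The open Bowen ball `B_n^T(x, ε)`. -/
def bowenBall (T : ∀ k, X k → X (k + 1)) (n : ℕ) (x : X 0) (ε : ℝ) : Set (X 0) :=
  {y | bowenDist T n x y < ε}

/-- The closed Bowen ball `clB_n^T(x, ε)`. -/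
def bowenClosedBall (T : ∀ k, X k → X (k + 1)) (n : ℕ) (x : X 0) (ε : ℝ) : Set (X 0) :=
  {y | bowenDist T n x y ≤ ε}

/-- Birkhoff sums starting at level `k`:  `S_{k,n}^T f = Σ_{j<n} f_{k+j} ∘ T_k^j`. -/
def birkFrom (T : ∀ k, X k → X (k + 1)) (f : ∀ k, X k → ℝ) (k n : ℕ) (x : X k) : ℝ :=
  ∑ j ∈ Finset.range n, f (k + j) (iterFrom T k j x)

/-- Birkhoff sums `S_n^T f = Σ_{j<n} f_j ∘ T^j` on `X 0`. -/
def birk (T : ∀ k, X k → X (k + 1)) (f : ∀ k, X k → ℝ) (n : ℕ) (x : X 0) : ℝ :=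
  ∑ j ∈ Finset.range n, f j (iter T j x)

/-- A potential `f = {f_k}` is equicontinuous. -/
def EquicontPotential (f : ∀ k, X k → ℝ) : Prop :=
  ∀ ε : ℝ, 0 < ε → ∃ δ : ℝ, 0 < δ ∧
    ∀ k, ∀ x y : X k, dist x y < δ → |f k x - f k y| < ε

/-- The sequence of maps `T = {T_k}` is equicontinuous. -/
def EquicontMaps (T : ∀ k, X k → X (k + 1)) : Prop :=
  ∀ ε : ℝ, 0 < ε → ∃ δ : ℝ, 0 < δ ∧
    ∀ k, ∀ x y : X k, dist x y < δ → dist (T k x) (T k y) < ε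

/-- `F` is an `(n,ε)`-spanning set for `Z`. -/
def IsSpanning (T : ∀ k, X k → X (k + 1)) (n : ℕ) (ε : ℝ) (Z : Set (X 0))
    (F : Finset (X 0)) : Prop :=
  ∀ x ∈ Z, ∃ y ∈ F, bowenDist T n x y ≤ ε

/-- `E` is an `(n,ε)`-separated set for `Z`. -/
def IsSeparated (T : ∀ k, X k → X (k + 1)) (n : ℕ) (ε : ℝ) (Z : Set (X 0))
    (E : Finset (X 0)) : Prop :=
  ↑E ⊆ Z ∧ ∀ x ∈ E, ∀ y ∈ E, x ≠ y → ε < bowenDist T n x y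

/-- The partition sum `Σ_{x ∈ F} e^{S_n^T f(x)}` (valued in `ℝ≥0∞`). -/
def partSum (T : ∀ k, X k → X (k + 1)) (f : ∀ k, X k → ℝ) (n : ℕ) (F : Finset (X 0)) : ℝ≥0∞ :=
  ∑ x ∈ F, ENNReal.ofReal (Real.exp (birk T f n x))

/-- `Q_n(T,f,Z,ε)`, infimum over `(n,ε)`-spanning sets. -/
def Qn (T : ∀ k, X k → X (k + 1)) (f : ∀ k, X k → ℝ) (Z : Set (X 0)) (n : ℕ) (ε : ℝ) : ℝ≥0∞ :=
  ⨅ (F : Finset (X 0)) (_ : IsSpanning T n ε Z F), partSum T f n F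

/-- `P_n(T,f,Z,ε)`, supremum over `(n,ε)`-separated sets. -/
def Pn (T : ∀ k, X k → X (k + 1)) (f : ∀ k, X k → ℝ) (Z : Set (X 0)) (n : ℕ) (ε : ℝ) : ℝ≥0∞ :=
  ⨆ (E : Finset (X 0)) (_ : IsSeparated T n ε Z E), partSum T f n E

/-- `liminf_n (1/n) log u n` (in `EReal`). -/
def lowRate (u : ℕ → ℝ≥0∞) : EReal :=
  Filter.atTop.liminf fun n : ℕ => (((n : ℝ)⁻¹ : ℝ) : EReal) * ENNReal.log (u n)

/-- `limsup_n (1/n) log u n` (in `EReal`). -/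
def upRate (u : ℕ → ℝ≥0∞) : EReal :=
  Filter.atTop.limsup fun n : ℕ => (((n : ℝ)⁻¹ : ℝ) : EReal) * ENNReal.log (u n)

/-- Lower spanning topological pressure `Q_low(T,f,Z)`; the limit as `ε → 0` is realised as a
supremum over `ε > 0`, the quantity being monotone in `ε`. -/
def Qlow (T : ∀ k, X k → X (k + 1)) (f : ∀ k, X k → ℝ) (Z : Set (X 0)) : EReal :=
  ⨆ (ε : ℝ) (_ : 0 < ε), lowRate fun n => Qn T f Z n ε

/-- Upper spanning topological pressure `Q_up(T,f,Z)`. -/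
def Qup (T : ∀ k, X k → X (k + 1)) (f : ∀ k, X k → ℝ) (Z : Set (X 0)) : EReal :=
  ⨆ (ε : ℝ) (_ : 0 < ε), upRate fun n => Qn T f Z n ε

/-- Lower separated topological pressure `P_low(T,f,Z)`. -/
def Plow (T : ∀ k, X k → X (k + 1)) (f : ∀ k, X k → ℝ) (Z : Set (X 0)) : EReal :=
  ⨆ (ε : ℝ) (_ : 0 < ε), lowRate fun n => Pn T f Z n ε

/-- Upper separated topological pressure `P_up(T,f,Z)`. -/
def Pup (T : ∀ k, X k → X (k + 1)) (f : ∀ k, X k → ℝ) (Z : Set (X 0)) : EReal :=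
  ⨆ (ε : ℝ) (_ : 0 < ε), upRate fun n => Pn T f Z n ε

/-- The critical value `inf {s : M s = 0}` of a "measure profile" `M`, as an extended real. -/
def crit (M : ℝ → ℝ≥0∞) : EReal :=
  sInf (Real.toEReal '' {s : ℝ | M s = 0})

/-- The critical value `sup {s : M s = ∞}` of a "measure profile" `M`, as an extended real. -/
def critSup (M : ℝ → ℝ≥0∞) : EReal :=
  sSup (Real.toEReal '' {s : ℝ | M s = ⊤})

/-- A countable family of Bowen balls (recorded by their (center, order) data) which is an
`(N,ε)`-cover of `Z`. -/
def IsBowenCover (T : ∀ k, X k → X (k + 1)) (N : ℕ) (ε : ℝ) (Z : Set (X 0))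
    (C : Set (X 0 × ℕ)) : Prop :=
  C.Countable ∧ (∀ p ∈ C, N ≤ p.2) ∧ Z ⊆ ⋃ p ∈ C, bowenBall T p.2 p.1 ε

/-- A countable disjoint family of closed Bowen balls with centers in `Z` and orders `≥ N`:
an `(N,ε)`-packing of `Z`. -/
def IsBowenPacking (T : ∀ k, X k → X (k + 1)) (N : ℕ) (ε : ℝ) (Z : Set (X 0))
    (P : Set (X 0 × ℕ)) : Prop :=
  P.Countable ∧ (∀ p ∈ P, p.1 ∈ Z ∧ N ≤ p.2) ∧
    ∀ p ∈ P, ∀ q ∈ P, p ≠ q →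
      Disjoint (bowenClosedBall T p.2 p.1 ε) (bowenClosedBall T q.2 q.1 ε)

/-- `Σ_i exp (-n_i s + S_{n_i}^T f (x_i))` over a family of (center, order) pairs. -/
def ballSum (T : ∀ k, X k → X (k + 1)) (f : ∀ k, X k → ℝ) (s : ℝ) (C : Set (X 0 × ℕ)) : ℝ≥0∞ :=
  ∑' p : C, ENNReal.ofReal (Real.exp (-(p.1.2 : ℝ) * s + birk T f p.1.2 p.1.1))

/-- The Hausdorff-type pre-measure `M^s_{N,ε}(T,f,Z)`. -/
def bowenPreMeas (T : ∀ k, X k → X (k + 1)) (f : ∀ k, X k → ℝ) (Z : Set (X 0))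
    (s : ℝ) (N : ℕ) (ε : ℝ) : ℝ≥0∞ :=
  ⨅ (C : Set (X 0 × ℕ)) (_ : IsBowenCover T N ε Z C), ballSum T f s C

/-- `M^s_ε(T,f,Z) = lim_{N → ∞} M^s_{N,ε}(T,f,Z)` (an increasing limit, i.e. a supremum). -/
def bowenMeas (T : ∀ k, X k → X (k + 1)) (f : ∀ k, X k → ℝ) (Z : Set (X 0))
    (s : ℝ) (ε : ℝ) : ℝ≥0∞ :=
  ⨆ N : ℕ, bowenPreMeas T f Z s N ε

/-- `P^B(T,f,Z,ε)`: the critical value of `s ↦ M^s_ε(T,f,Z)`. -/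
def PBe (T : ∀ k, X k → X (k + 1)) (f : ∀ k, X k → ℝ) (Z : Set (X 0)) (ε : ℝ) : EReal :=
  crit fun s => bowenMeas T f Z s ε

/-- The Bowen (Pesin–Pitskel') topological pressure `P^B(T,f,Z)`; the limit as `ε → 0` is
realised as a supremum over `ε > 0` by monotonicity. -/
def PB (T : ∀ k, X k → X (k + 1)) (f : ∀ k, X k → ℝ) (Z : Set (X 0)) : EReal :=
  ⨆ (ε : ℝ) (_ : 0 < ε), PBe T f Z ε

/-- The packing pre-measure `𝒫^s_{N,ε}(T,f,Z)`. -/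
def packPre (T : ∀ k, X k → X (k + 1)) (f : ∀ k, X k → ℝ) (Z : Set (X 0))
    (s : ℝ) (N : ℕ) (ε : ℝ) : ℝ≥0∞ :=
  ⨆ (P : Set (X 0 × ℕ)) (_ : IsBowenPacking T N ε Z P), ballSum T f s P

/-- The packing content `𝒫^s_{∞,ε}(T,f,Z) = lim_{N→∞} 𝒫^s_{N,ε}` (a decreasing limit, i.e. an
infimum). -/
def packContent (T : ∀ k, X k → X (k + 1)) (f : ∀ k, X k → ℝ) (Z : Set (X 0))
    (s : ℝ) (ε : ℝ) : ℝ≥0∞ :=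
  ⨅ N : ℕ, packPre T f Z s N ε

/-- The packing measure `𝒫^s_ε(T,f,Z)`, obtained from the content by countable decompositions. -/
def packMeas (T : ∀ k, X k → X (k + 1)) (f : ∀ k, X k → ℝ) (Z : Set (X 0))
    (s : ℝ) (ε : ℝ) : ℝ≥0∞ :=
  ⨅ (D : ℕ → Set (X 0)) (_ : Z ⊆ ⋃ i, D i), ∑' i, packContent T f (D i) s ε

/-- `P^P(T,f,Z,ε)`: the critical value of `s ↦ 𝒫^s_ε(T,f,Z)`. -/
def PPe (T : ∀ k, X k → X (k + 1)) (f : ∀ k, X k → ℝ) (Z : Set (X 0)) (ε : ℝ) : EReal :=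
  crit fun s => packMeas T f Z s ε

/-- The packing topological pressure `P^P(T,f,Z)`. -/
def PP (T : ∀ k, X k → X (k + 1)) (f : ∀ k, X k → ℝ) (Z : Set (X 0)) : EReal :=
  ⨆ (ε : ℝ) (_ : 0 < ε), PPe T f Z ε

end NDS

namespace NDS

variable {X : ℕ → Type*} [∀ k, MetricSpace (X k)]

section Aux

variable (T : ∀ k, X k → X (k + 1)) (f : ∀ k, X k → ℝ)

lemma iter_continuous (hT : ∀ k, Continuous (T k)) : ∀ j, Continuous (iter T j)
  | 0 => continuous_id
  | j + 1 => (hT j).comp (iter_continuous hT j)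

lemma birk_continuous (hT : ∀ k, Continuous (T k)) (hf : ∀ k, Continuous (f k)) (n : ℕ) :
    Continuous (birk T f n) :=
  continuous_finset_sum _ fun j _ => (hf j).comp (iter_continuous T hT j)

lemma bowenDist_self (n : ℕ) (x : X 0) : bowenDist T n x x = 0 := by
  have h : ((Finset.range n).sup fun j => nndist (iter T j x) (iter T j x)) = 0 := by
    simp [nndist_self]
  simp [bowenDist, h]

lemma bowenDist_comm (n : ℕ) (x y : X 0) : bowenDist T n x y = bowenDist T n y x := by
  unfold bowenDist
  congr 1
  exact Finset.sup_congr rfl fun j _ => nndist_comm _ _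

lemma bowenDist_triangle (n : ℕ) (x y z : X 0) :
    bowenDist T n x z ≤ bowenDist T n x y + bowenDist T n y z := by
  unfold bowenDist
  rw [← NNReal.coe_add, NNReal.coe_le_coe]
  refine Finset.sup_le fun j hj => ?_
  exact (nndist_triangle _ (iter T j y) _).trans
    (add_le_add (Finset.le_sup (f := fun j => nndist (iter T j x) (iter T j y)) hj)
      (Finset.le_sup (f := fun j => nndist (iter T j y) (iter T j z)) hj))

lemma bowenDist_lt_of_forall {n : ℕ} {x y : X 0} {η : ℝ} (hη : 0 < η)
    (h : ∀ j < n, dist (iter T j x) (iter T j y) < η) : bowenDist T n x y < η := by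
  have hsup : ((Finset.range n).sup fun j => nndist (iter T j x) (iter T j y)) < η.toNNReal := by
    rw [Finset.sup_lt_iff (Real.toNNReal_pos.mpr hη)]
    intro j hj
    rw [← NNReal.coe_lt_coe, coe_nndist, Real.coe_toNNReal _ hη.le]
    exact h j (Finset.mem_range.mp hj)
  calc bowenDist T n x y < ((η.toNNReal : ℝ≥0) : ℝ) := by exact_mod_cast hsup
    _ = η := Real.coe_toNNReal _ hη.le

lemma exists_perturb (hT : ∀ k, Continuous (T k)) (hf : ∀ k, Continuous (f k))
    {Z : Set (X 0)} {x : X 0} (hx : x ∈ closure Z) (n : ℕ) {η δ : ℝ}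
    (hη : 0 < η) (hδ : 0 < δ) :
    ∃ z ∈ Z, bowenDist T n x z < η ∧ |birk T f n z - birk T f n x| < δ := by
  set U : Set (X 0) :=
    (⋂ j ∈ Finset.range n, (iter T j) ⁻¹' Metric.ball (iter T j x) η) ∩
      ((birk T f n) ⁻¹' Metric.ball (birk T f n x) δ) with hU
  have hUo : IsOpen U := by
    refine IsOpen.inter ?_ ?_
    · exact isOpen_biInter_finset fun j _ =>
        Metric.isOpen_ball.preimage (iter_continuous T hT j)
    · exact Metric.isOpen_ball.preimage (birk_continuous T f hT hf n)
  have hxU : x ∈ U := by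
    constructor
    · exact Set.mem_biInter fun j _ => Metric.mem_ball_self hη
    · exact Metric.mem_ball_self hδ
  obtain ⟨z, hzU, hzZ⟩ := _root_.mem_closure_iff.mp hx U hUo hxU
  refine ⟨z, hzZ, ?_, ?_⟩
  · refine bowenDist_lt_of_forall T hη fun j hj => ?_
    have := Set.mem_iInter₂.mp hzU.1 j (Finset.mem_range.mpr hj)
    simp only [Set.mem_preimage, Metric.mem_ball] at this
    rw [dist_comm]
    exact this
  · have := hzU.2
    rw [Set.mem_preimage, Metric.mem_ball, Real.dist_eq] at this
    exact this

lemma Pn_le_of_subset_closure (hT : ∀ k, Continuous (T k)) (hf : ∀ k, Continuous (f k))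
    {Z W : Set (X 0)} (hWZ : W ⊆ closure Z) {ε ε' : ℝ} (hε' : 0 < ε') (hlt : ε' < ε) (n : ℕ) :
    Pn T f W n ε ≤ Pn T f Z n ε' := by
  classical
  refine iSup₂_le fun E hE => ?_
  refine ENNReal.le_of_forall_lt_one_mul_le fun a ha => ?_
  rcases eq_or_ne a 0 with rfl | ha0
  · simp
  have haT : a ≠ ⊤ := (ha.trans ENNReal.one_lt_top).ne
  set r : ℝ := a.toReal with hrdef
  have hr0 : 0 < r := ENNReal.toReal_pos ha0 haT
  have hr1 : r < 1 := by
    have := (ENNReal.toReal_lt_toReal haT ENNReal.one_ne_top).mpr ha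
    simpa using this
  set δ : ℝ := -Real.log r with hδdef
  have hδ : 0 < δ := neg_pos.mpr (Real.log_neg hr0 hr1)
  have hexp : Real.exp (-δ) = r := by rw [hδdef, neg_neg, Real.exp_log hr0]
  set η : ℝ := (ε - ε') / 2 with hηdef
  have hη : 0 < η := by rw [hηdef]; linarith
  have hch : ∀ x ∈ E, ∃ z, z ∈ Z ∧ bowenDist T n x z < η ∧
      |birk T f n z - birk T f n x| < δ := by
    intro x hx
    obtain ⟨z, hz1, hz2, hz3⟩ := exists_perturb T f hT hf (hWZ (hE.1 hx)) n hη hδ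
    exact ⟨z, hz1, hz2, hz3⟩
  choose! g hg1 hg2 hg3 using hch
  have hsep : ∀ x ∈ E, ∀ y ∈ E, x ≠ y → ε' < bowenDist T n (g x) (g y) := by
    intro x hx y hy hxy
    have h1 := hE.2 x hx y hy hxy
    have t1 := bowenDist_triangle T n x (g x) y
    have t2 := bowenDist_triangle T n (g x) (g y) y
    have h2 := hg2 x hx
    have h3 := hg2 y hy
    have h3' : bowenDist T n (g y) y = bowenDist T n y (g y) := bowenDist_comm T n _ _
    rw [hηdef] at h2 h3
    linarith
  have hinj : ∀ x ∈ E, ∀ y ∈ E, g x = g y → x = y := by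
    intro x hx y hy hgxy
    by_contra hne
    have h := hsep x hx y hy hne
    rw [hgxy, bowenDist_self] at h
    linarith
  have hE' : IsSeparated T n ε' Z (E.image g) := by
    constructor
    · intro z hz
      rw [Finset.coe_image] at hz
      obtain ⟨x, hx, rfl⟩ := hz
      exact hg1 x hx
    · intro a ha' b hb' hab
      obtain ⟨x, hx, rfl⟩ := Finset.mem_image.mp ha'
      obtain ⟨y, hy, rfl⟩ := Finset.mem_image.mp hb'
      exact hsep x hx y hy (fun h => hab (h ▸ rfl))
  have key : a * partSum T f n E ≤ partSum T f n (E.image g) := by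
    rw [partSum, Finset.mul_sum, partSum, Finset.sum_image hinj]
    refine Finset.sum_le_sum fun x hx => ?_
    have ha' : a = ENNReal.ofReal (Real.exp (-δ)) := by
      rw [hexp, hrdef, ENNReal.ofReal_toReal haT]
    rw [ha', ← ENNReal.ofReal_mul (Real.exp_nonneg _), ← Real.exp_add]
    refine ENNReal.ofReal_le_ofReal (Real.exp_le_exp.mpr ?_)
    have := abs_lt.mp (hg3 x hx)
    linarith [this.1]
  refine key.trans ?_
  exact le_iSup₂ (f := fun (E' : Finset (X 0)) (_ : IsSeparated T n ε' Z E') =>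
    partSum T f n E') (E.image g) hE'

lemma lowRate_mono {u v : ℕ → ℝ≥0∞} (h : ∀ n, u n ≤ v n) : lowRate u ≤ lowRate v := by
  refine Filter.liminf_le_liminf (Filter.Eventually.of_forall fun n => ?_)
  exact mul_le_mul_of_nonneg_left (ENNReal.log_monotone (h n))
    (by exact_mod_cast EReal.coe_nonneg.mpr (inv_nonneg.mpr (Nat.cast_nonneg n)))

lemma upRate_mono {u v : ℕ → ℝ≥0∞} (h : ∀ n, u n ≤ v n) : upRate u ≤ upRate v := by
  refine Filter.limsup_le_limsup (Filter.Eventually.of_forall fun n => ?_)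
  exact mul_le_mul_of_nonneg_left (ENNReal.log_monotone (h n))
    (by exact_mod_cast EReal.coe_nonneg.mpr (inv_nonneg.mpr (Nat.cast_nonneg n)))

lemma Plow_le_of_subset_closure (hT : ∀ k, Continuous (T k)) (hf : ∀ k, Continuous (f k))
    {Z W : Set (X 0)} (h : W ⊆ closure Z) : Plow T f W ≤ Plow T f Z := by
  refine iSup₂_le fun ε hε => ?_
  have h2 : 0 < ε / 2 := half_pos hε
  calc lowRate (fun n => Pn T f W n ε) ≤ lowRate (fun n => Pn T f Z n (ε / 2)) :=
      lowRate_mono fun n => Pn_le_of_subset_closure T f hT hf h h2 (half_lt_self hε) n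
    _ ≤ Plow T f Z := le_iSup₂ (f := fun (ε : ℝ) (_ : 0 < ε) =>
        lowRate fun n => Pn T f Z n ε) (ε / 2) h2

lemma Pup_le_of_subset_closure (hT : ∀ k, Continuous (T k)) (hf : ∀ k, Continuous (f k))
    {Z W : Set (X 0)} (h : W ⊆ closure Z) : Pup T f W ≤ Pup T f Z := by
  refine iSup₂_le fun ε hε => ?_
  have h2 : 0 < ε / 2 := half_pos hε
  calc upRate (fun n => Pn T f W n ε) ≤ upRate (fun n => Pn T f Z n (ε / 2)) :=
      upRate_mono fun n => Pn_le_of_subset_closure T f hT hf h h2 (half_lt_self hε) n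
    _ ≤ Pup T f Z := le_iSup₂ (f := fun (ε : ℝ) (_ : 0 < ε) =>
        upRate fun n => Pn T f Z n ε) (ε / 2) h2

end Aux

lemma abstract_main {Y : Type*} [MetricSpace Y] {P : Set Y → EReal} {K : Set Y}
    (hmono : ∀ W Z : Set Y, W ⊆ closure Z → P W ≤ P Z)
    (hK : IsCompact K) (hKne : K.Nonempty)
    (hom : ∀ V : Set Y, IsOpen V → (V ∩ K).Nonempty → P (K ∩ V) = P K) :
    P K = ⨅ (F : ℕ → Set Y) (_ : K ⊆ ⋃ i, F i), ⨆ i, P (F i) := by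
  refine le_antisymm ?_ ?_
  · refine le_iInf₂ fun F hF => ?_
    haveI : CompactSpace ↥K := isCompact_iff_compactSpace.mp hK
    haveI : Nonempty ↥K := hKne.to_subtype
    set G : ℕ → Set ↥K := fun i => Subtype.val ⁻¹' closure (F i ∩ K) with hG
    have hGc : ∀ i, IsClosed (G i) := fun i => isClosed_closure.preimage continuous_subtype_val
    have hGu : ⋃ i, G i = Set.univ := by
      refine Set.eq_univ_of_forall fun x => ?_
      obtain ⟨i, hi⟩ := Set.mem_iUnion.mp (hF x.2)
      exact Set.mem_iUnion.mpr ⟨i, subset_closure ⟨hi, x.2⟩⟩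
    obtain ⟨i, x, hx⟩ := nonempty_interior_of_iUnion_of_closed hGc hGu
    rw [mem_interior] at hx
    obtain ⟨t, htG, hto, hxt⟩ := hx
    obtain ⟨V, hVo, rfl⟩ := isOpen_induced_iff.mp hto
    have hVK : (V ∩ K).Nonempty := ⟨x.1, hxt, x.2⟩
    have hsub : K ∩ V ⊆ closure (F i ∩ K) := by
      rintro y ⟨hyK, hyV⟩
      exact htG (show (⟨y, hyK⟩ : ↥K) ∈ Subtype.val ⁻¹' V from hyV)
    calc P K = P (K ∩ V) := (hom V hVo hVK).symm
      _ ≤ P (F i ∩ K) := hmono _ _ hsub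
      _ ≤ P (F i) := hmono _ _ (Set.inter_subset_left.trans subset_closure)
      _ ≤ ⨆ i, P (F i) := le_iSup (fun i => P (F i)) i
  · refine iInf₂_le_of_le (fun _ => K) (fun x hx => Set.mem_iUnion.mpr ⟨0, hx⟩) ?_
    exact le_of_eq iSup_const

end NDS

/-- On a non-empty compact set `K` that is "pressure-homogeneous" for the
lower (resp. upper) separated pressure, that pressure equals the infimum, over countable
covers of `K`, of the supremum of the pressures of the pieces. -/
theorem pressure_homogeneous_compact {X : ℕ → Type*} [∀ k, MetricSpace (X k)]
    [∀ k, CompactSpace (X k)] (T : ∀ k, X k → X (k + 1)) (hT : ∀ k, Continuous (T k))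
    (f : ∀ k, X k → ℝ) (hf : ∀ k, Continuous (f k))
    (K : Set (X 0)) (hK : IsCompact K) (hKne : K.Nonempty) :
    ((∀ V : Set (X 0), IsOpen V → (V ∩ K).Nonempty →
        NDS.Plow T f (K ∩ V) = NDS.Plow T f K) →
      NDS.Plow T f K =
        ⨅ (F : ℕ → Set (X 0)) (_ : K ⊆ ⋃ i, F i), ⨆ i, NDS.Plow T f (F i)) ∧
    ((∀ V : Set (X 0), IsOpen V → (V ∩ K).Nonempty →
        NDS.Pup T f (K ∩ V) = NDS.Pup T f K) →
      NDS.Pup T f K =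
        ⨅ (F : ℕ → Set (X 0)) (_ : K ⊆ ⋃ i, F i), ⨆ i, NDS.Pup T f (F i)) := by
  constructor
  · intro h
    exact NDS.abstract_main (fun W Z hWZ => NDS.Plow_le_of_subset_closure T f hT hf hWZ)
      hK hKne h
  · intro h
    exact NDS.abstract_main (fun W Z hWZ => NDS.Pup_le_of_subset_closure T f hT hf hWZ)
      hK hKne h
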